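/- For the DSII solution U(z,t) = i(z² − 2i(t−C))/(|z|² + |z² + 2i(t−C)|²) at the singular time t = C, writing z = re^{iφ}, one has U(re^{iφ}, C) → i e^{2iφ} as r → 0⁺ for each fixed φ; consequently U has no limit at z = 0 (different directional limits), i.e., the singularity is an indeterminacy. -/

import Mathlib

/-! At t = C the numerator i z² and the denominator |z|² + |z|⁴ are both of order r², and
after cancelling r² one gets U(re^{iφ}, C) = i e^{2iφ} / (1 + r²). The limit along the ray of
angle φ is therefore i e^{2iφ}, which is i for φ = 0 but −i for φ = π/2. -/

open Complex Filter Topology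

/-- U(z,t) = i(z² − 2i(t−C))/(|z|² + |z² + 2i(t−C)|²) -/
noncomputable def UDSC (C : ℝ) (z : ℂ) (t : ℝ) : ℂ :=
  Complex.I * (z^2 - 2 * Complex.I * ((t - C : ℝ) : ℂ))
    / (((‖z‖^2 + ‖z^2 + 2 * Complex.I * ((t - C : ℝ) : ℂ)‖^2 : ℝ)) : ℂ)

lemma UDSC_singular_time (C : ℝ) (z : ℂ) :
    UDSC C z C = I * z ^ 2 / ((‖z‖ ^ 2 + ‖z‖ ^ 4 : ℝ) : ℂ) := by
  simp only [UDSC, sub_self, ofReal_zero, mul_zero, sub_zero, add_zero, norm_pow]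
  ring_nf

lemma UDSC_singular_time_polar (C φ : ℝ) {r : ℝ} (hr : r ≠ 0) :
    UDSC C (r * exp (I * φ)) C = I * exp (2 * I * φ) / ((1 + r ^ 2 : ℝ) : ℂ) := by
  have hnorm : ‖(r : ℂ) * exp (I * φ)‖ = |r| := by
    rw [norm_mul, norm_real, Real.norm_eq_abs, mul_comm I, norm_exp_ofReal_mul_I, mul_one]
  have hsq : ((r : ℂ) * exp (I * φ)) ^ 2 = (r : ℂ) ^ 2 * exp (2 * I * φ) := by
    rw [mul_pow, ← exp_nat_mul]
    ring_nf
  have hr2 : (r : ℂ) ^ 2 ≠ 0 := pow_ne_zero 2 (ofReal_ne_zero.mpr hr)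
  have hden : |r| ^ 2 + |r| ^ 4 = r ^ 2 * (1 + r ^ 2) := by
    rw [show |r| ^ 4 = (|r| ^ 2) ^ 2 by ring, sq_abs]
    ring
  rw [UDSC_singular_time, hnorm, hsq, hden, ofReal_mul, ofReal_pow,
    mul_left_comm, mul_div_mul_left _ _ hr2]

lemma tendsto_UDSC_singular_time_polar (C φ : ℝ) :
    Tendsto (fun r : ℝ => UDSC C (r * exp (I * φ)) C) (𝓝[≠] 0) (𝓝 (I * exp (2 * I * φ))) := by
  have hcont : Tendsto (fun r : ℝ => I * exp (2 * I * φ) / ((1 + r ^ 2 : ℝ) : ℂ)) (𝓝 0)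
      (𝓝 (I * exp (2 * I * φ))) := by
    have hden : Tendsto (fun r : ℝ => ((1 + r ^ 2 : ℝ) : ℂ)) (𝓝 0) (𝓝 ((1 + 0 ^ 2 : ℝ) : ℂ)) :=
      (continuous_ofReal.comp (by fun_prop : Continuous fun r : ℝ => 1 + r ^ 2)).tendsto 0
    simpa [Pi.div_def] using (tendsto_const_nhds (x := I * exp (2 * I * φ))).div hden (by norm_num)
  refine (hcont.mono_left nhdsWithin_le_nhds).congr' ?_
  filter_upwards [self_mem_nhdsWithin] with r hr
  exact (UDSC_singular_time_polar C φ hr).symm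

lemma tendsto_ofReal_mul_nhdsNE {c : ℂ} (hc : c ≠ 0) :
    Tendsto (fun r : ℝ => (r : ℂ) * c) (𝓝[≠] 0) (𝓝[≠] 0) := by
  refine tendsto_nhdsWithin_of_tendsto_nhds_of_eventually_within _ ?_ ?_
  · simpa using ((continuous_ofReal.mul continuous_const).tendsto (0 : ℝ)).mono_left
      (nhdsWithin_le_nhds (s := {0}ᶜ)) (f := fun r : ℝ => (r : ℂ) * c)
  · filter_upwards [self_mem_nhdsWithin] with r hr
    exact mul_ne_zero (ofReal_ne_zero.mpr hr) hc

theorem dsii_singularity_is_indeterminacy (C : ℝ) :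
    (∀ φ : ℝ, Tendsto (fun r : ℝ => UDSC C ((r : ℂ) * Complex.exp (Complex.I * (φ : ℂ))) C)
      (nhdsWithin 0 (Set.Ioi 0))
      (nhds (Complex.I * Complex.exp (2 * Complex.I * (φ : ℂ))))) ∧
    ¬ ∃ L : ℂ, Tendsto (fun z : ℂ => UDSC C z C) (nhdsWithin 0 {(0 : ℂ)}ᶜ) (nhds L) := by
  refine ⟨fun φ => (tendsto_UDSC_singular_time_polar C φ).mono_left
    (nhdsWithin_mono _ fun r (hr : 0 < r) => hr.ne'), ?_⟩
  rintro ⟨L, hL⟩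
  have hdir (φ : ℝ) : L = I * exp (2 * I * φ) :=
    tendsto_nhds_unique (hL.comp (tendsto_ofReal_mul_nhdsNE (exp_ne_zero _)))
      (tendsto_UDSC_singular_time_polar C φ)
  have h0 : I * exp (2 * I * ((0 : ℝ) : ℂ)) = I := by simp
  have hpi : I * exp (2 * I * ((Real.pi / 2 : ℝ) : ℂ)) = -I := by
    rw [show 2 * I * ((Real.pi / 2 : ℝ) : ℂ) = Real.pi * I by push_cast; ring, exp_pi_mul_I]
    ring
  have hI : I = -I := (h0 ▸ hdir 0).symm.trans (hpi ▸ hdir (Real.pi / 2))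
  exact I_ne_zero (by linear_combination hI / 2)
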